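/- arXiv:0902.0043 — 3 statements merged into one kernel-verified Lean document; each statement's English description precedes it below -/
import Mathlib

section
/- The tautology ∀P:o. P ⇒ P (encoded as Π^o(λP:o. ¬P ∨ P)) is 3-cut-strong in the sequent calculus G_β: if Δ * C is derivable in n steps and Δ * ¬C is derivable in m steps (for β-normal closed C of type o), then Δ * ¬(∀P:o. ¬P ∨ P) is derivable in at most n+m+3 steps. -/
namespace CutSim

inductive Ty : Type
  | o : Ty
  | i : Ty
  | arr : Ty → Ty → Ty
  deriving DecidableEq

inductive Tm : Type
  | var : ℕ → Tm
  | param : ℕ → Ty → Tm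
  | cnot : Tm
  | cor : Tm
  | cpi : Ty → Tm
  | app : Tm → Tm → Tm
  | lam : Ty → Tm → Tm
  deriving DecidableEq

open Ty Tm

/-- negation ¬A -/
def NEG (A : Tm) : Tm := .app .cnot A
/-- disjunction A ∨ B -/
def OR (A B : Tm) : Tm := .app (.app .cor A) B
/-- Π^α F -/
def PI (a : Ty) (F : Tm) : Tm := .app (.cpi a) F
/-- implication A ⇒ B := ¬A ∨ B -/
def IMP (A B : Tm) : Tm := OR (NEG A) B
/-- equivalence A ⟺ B := ¬(¬(A⇒B) ∨ ¬(B⇒A)) -/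
def IFF (A B : Tm) : Tm := NEG (OR (NEG (IMP A B)) (NEG (IMP B A)))

/-- de Bruijn shifting: add d to all variables ≥ c -/
def shift (d c : ℕ) : Tm → Tm
  | .var n => if n < c then .var n else .var (n + d)
  | .param k a => .param k a
  | .cnot => .cnot
  | .cor => .cor
  | .cpi a => .cpi a
  | .app f x => .app (shift d c f) (shift d c x)
  | .lam a b => .lam a (shift d (c+1) b)

/-- capture-avoiding substitution of s for variable k -/
def subst (k : ℕ) (s : Tm) : Tm → Tm
  | .var n => if n = k then shift k 0 s else if k < n then .var (n-1) else .var n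
  | .param m a => .param m a
  | .cnot => .cnot
  | .cor => .cor
  | .cpi a => .cpi a
  | .app f x => .app (subst k s f) (subst k s x)
  | .lam a b => .lam a (subst (k+1) s b)

/-- simple typing relation -/
inductive HasTy : List Ty → Tm → Ty → Prop
  | var {Γ n a} : Γ[n]? = some a → HasTy Γ (.var n) a
  | param {Γ k a} : HasTy Γ (.param k a) a
  | cnot {Γ} : HasTy Γ .cnot (.arr .o .o)
  | cor {Γ} : HasTy Γ .cor (.arr .o (.arr .o .o))
  | cpi {Γ a} : HasTy Γ (.cpi a) (.arr (.arr a .o) .o)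
  | app {Γ f x a b} : HasTy Γ f (.arr a b) → HasTy Γ x a → HasTy Γ (.app f x) b
  | lam {Γ a B b} : HasTy (a :: Γ) B b → HasTy Γ (.lam a B) (.arr a b)

/-- a sentence is a closed formula of type o -/
def Sent (A : Tm) : Prop := HasTy [] A .o

/-- one-step β-reduction -/
inductive Beta : Tm → Tm → Prop
  | beta {a B s} : Beta (.app (.lam a B) s) (subst 0 s B)
  | appl {f f' x} : Beta f f' → Beta (.app f x) (.app f' x)
  | appr {f x x'} : Beta x x' → Beta (.app f x) (.app f x')
  | lam {a b b'} : Beta b b' → Beta (.lam a b) (.lam a b')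

def BetaStar : Tm → Tm → Prop := Relation.ReflTransGen Beta
def IsBetaNormal (A : Tm) : Prop := ∀ B, ¬ Beta A B
/-- B is the β-normal form of A -/
def BetaNF (A B : Tm) : Prop := BetaStar A B ∧ IsBetaNormal B
/-- β-equality (via confluence: common reduct) -/
def BetaEq (A B : Tm) : Prop := ∃ C, BetaStar A C ∧ BetaStar B C

def headIsLogical : Tm → Prop
  | .app f _ => headIsLogical f
  | .cnot => True
  | .cor => True
  | .cpi _ => True
  | _ => False

/-- atomic formula: β-normal, head not a logical constant -/
def Atomic (A : Tm) : Prop := IsBetaNormal A ∧ ¬ headIsLogical A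

def OccursParam (k : ℕ) (a : Ty) : Tm → Prop
  | .param m b => k = m ∧ a = b
  | .app f x => OccursParam k a f ∨ OccursParam k a x
  | .lam _ b => OccursParam k a b
  | _ => False

/-- β-normal sentence -/
def BNSent (C : Tm) : Prop := Sent C ∧ IsBetaNormal C

/-- The sequent calculus G_β, with the number of proof steps as index. -/
inductive Der : Finset Tm → ℕ → Prop
  | init {Δ : Finset Tm} {A} : Atomic A → Der (insert A (insert (NEG A) Δ)) 1
  | negI {Δ : Finset Tm} {A n} : Der (insert A Δ) n → Der (insert (NEG (NEG A)) Δ) (n+1)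
  | orL {Δ : Finset Tm} {A B n m} : Der (insert (NEG A) Δ) n → Der (insert (NEG B) Δ) m →
      Der (insert (NEG (OR A B)) Δ) (n+m+1)
  | orR {Δ : Finset Tm} {A B n} : Der (insert A (insert B Δ)) n → Der (insert (OR A B) Δ) (n+1)
  | piL {Δ : Finset Tm} {a F C D n} : HasTy [] C a → BetaNF (.app F C) D →
      Der (insert (NEG D) Δ) n → Der (insert (NEG (PI a F)) Δ) (n+1)
  | piR {Δ : Finset Tm} {a F c D n} : BetaNF (.app F (.param c a)) D →
      (∀ B ∈ insert (PI a F) Δ, ¬ OccursParam c a B) →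
      Der (insert D Δ) n → Der (insert (PI a F) Δ) (n+1)

/-- A is k-cut-strong for G_β -/
def CutStrong (k : ℕ) (A : Tm) : Prop :=
  ∀ (Δ : Finset Tm) (C : Tm) (n m : ℕ), BNSent C →
    Der (insert C Δ) n → Der (insert (NEG C) Δ) m →
    ∃ s ≤ n + m + k, Der (insert (NEG A) Δ) s

/-- Leibniz equality M ≐^α N := Π^{α→o}(λP. ¬(P M) ∨ (P N)) -/
def leib (a : Ty) (M N : Tm) : Tm :=
  PI (.arr a .o) (.lam (.arr a .o)
    (OR (NEG (.app (.var 0) (shift 1 0 M))) (.app (.var 0) (shift 1 0 N))))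

/-
A cut on `C` is simulated by instantiating `P := C`: `Δ * ¬¬C` (from `Δ * C`) and `Δ * ¬C`
give `Δ * ¬(¬C ∨ C)` by `∨⁻`, and `¬C ∨ C` is the β-normal form of `(λP. ¬P ∨ P) C`
because `C` is β-normal, so one `Π⁻` step finishes; three steps in all.
-/
lemma shift_zero (t : Tm) : ∀ c, shift 0 c t = t := by
  induction t <;> intro c <;> simp_all [shift]

lemma IsBetaNormal.neg {A : Tm} (hA : IsBetaNormal A) : IsBetaNormal (NEG A) := by
  rintro _ (_ | ⟨⟨⟩⟩ | ⟨h⟩)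
  exact hA _ h

lemma IsBetaNormal.or {A B : Tm} (hA : IsBetaNormal A) (hB : IsBetaNormal B) :
    IsBetaNormal (OR A B) := by
  rintro _ (_ | ⟨_ | ⟨⟨⟩⟩ | ⟨h⟩⟩ | ⟨h⟩)
  · exact hA _ h
  · exact hB _ h

lemma betaNF_app_lam {a : Ty} {B s : Tm} (h : IsBetaNormal (subst 0 s B)) :
    BetaNF (.app (.lam a B) s) (subst 0 s B) :=
  ⟨.single .beta, h⟩

lemma subst_excludedMiddle (C : Tm) :
    subst 0 C (OR (NEG (.var 0)) (.var 0)) = OR (NEG C) C := by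
  simp [OR, NEG, subst, shift_zero]

lemma der_neg_excludedMiddle {Δ : Finset Tm} {C : Tm} {n m : ℕ} (hC : BNSent C)
    (hpos : Der (insert C Δ) n) (hneg : Der (insert (NEG C) Δ) m) :
    Der (insert (NEG (PI .o (.lam .o (OR (NEG (.var 0)) (.var 0))))) Δ) (n + 1 + m + 1 + 1) := by
  have hnf : BetaNF (.app (.lam .o (OR (NEG (.var 0)) (.var 0))) C) (OR (NEG C) C) := by
    have h := betaNF_app_lam (a := .o) (B := OR (NEG (.var 0)) (.var 0)) (s := C)
    rw [subst_excludedMiddle] at h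
    exact h (hC.2.neg.or hC.2)
  exact .piL hC.1 hnf (.orL (.negI hpos) hneg)

/-- ∀P:o. P ⇒ P is 3-cut-strong in G_β -/
theorem stmt1 : CutStrong 3 (PI .o (.lam .o (OR (NEG (.var 0)) (.var 0)))) :=
  fun _ _ n m hC hpos hneg => ⟨_, by omega, der_neg_excludedMiddle hC hpos hneg⟩

end CutSim
end

section
/- Let S be a sequent calculus in which double-negation inversion is admissible. If Φ and Δ are finite sets of sentences and Φ ∪ ¬Δ ∉ Γ_S (where Γ_S is the class of finite sets Ψ with ¬(Ψ↓_β) not derivable in S), then the sequent ¬(Φ↓_β) ∪ Δ↓_β is derivable in S. -/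
/-!
A β-reduction of `¬A` takes place inside `A`, so a derivable sequent `¬((Φ ∪ ¬Δ)↓β)` splits as
`¬(Φ↓β) ∪ ¬¬(Δ↓β)`. Double-negation inversion, applied once per formula of `Δ↓β`, then
turns it into `¬(Φ↓β) ∪ Δ↓β`.
-/

namespace CutSim

open Ty Tm

/-- B is the negation of the β-normal form of A -/
def NegBNF (A B : Tm) : Prop := ∃ C, BetaNF A C ∧ B = NEG C
/-- Ψ = ¬(Φ↓β) -/
def NegNormSet (Φ Ψ : Finset Tm) : Prop :=
  (∀ A ∈ Φ, ∃ B ∈ Ψ, NegBNF A B) ∧ (∀ B ∈ Ψ, ∃ A ∈ Φ, NegBNF A B)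
/-- Φ ∈ Γ_S : the sequent ¬(Φ↓β) is not derivable in S -/
def InGamma (S : Finset Tm → Prop) (Φ : Finset Tm) : Prop :=
  ∀ Ψ : Finset Tm, NegNormSet Φ Ψ → ¬ S Ψ

/-- Ψ = Φ↓β -/
def NormSet (Φ Ψ : Finset Tm) : Prop :=
  (∀ A ∈ Φ, ∃ B ∈ Ψ, BetaNF A B) ∧ (∀ B ∈ Ψ, ∃ A ∈ Φ, BetaNF A B)

lemma NEG_injective : Function.Injective NEG := fun _ _ h => (Tm.app.inj h).2

lemma exists_eq_neg_of_betaStar_neg {A C : Tm} (h : BetaStar (NEG A) C) :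
    ∃ C', C = NEG C' ∧ BetaStar A C' := by
  induction h with
  | refl => exact ⟨A, rfl, .refl⟩
  | tail _ hstep ih =>
    obtain ⟨B, rfl, hB⟩ := ih
    cases hstep with
    | appl h => cases h
    | appr h => exact ⟨_, rfl, hB.tail h⟩

lemma exists_eq_neg_of_betaNF_neg {A C : Tm} (h : BetaNF (NEG A) C) :
    ∃ C', C = NEG C' ∧ BetaNF A C' := by
  obtain ⟨C', rfl, hred⟩ := exists_eq_neg_of_betaStar_neg h.1
  exact ⟨C', rfl, hred, fun D hD => h.2 (NEG D) (.appr hD)⟩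

lemma exists_eq_neg_neg_of_negBNF_neg {A B : Tm} (h : NegBNF (NEG A) B) :
    ∃ C, BetaNF A C ∧ B = NEG (NEG C) := by
  obtain ⟨C, hC, rfl⟩ := h
  obtain ⟨C', rfl, hC'⟩ := exists_eq_neg_of_betaNF_neg hC
  exact ⟨C', hC', rfl⟩

lemma NegNormSet.exists_union_eq {Φ Φ' Ψ : Finset Tm} (h : NegNormSet (Φ ∪ Φ') Ψ) :
    ∃ Ψ₁ Ψ₂, NegNormSet Φ Ψ₁ ∧ NegNormSet Φ' Ψ₂ ∧ Ψ = Ψ₁ ∪ Ψ₂ := by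
  classical
  let part (Θ : Finset Tm) : Finset Tm := Ψ.filter fun B => ∃ A ∈ Θ, NegBNF A B
  have hpart : ∀ Θ ⊆ Φ ∪ Φ', NegNormSet Θ (part Θ) := fun Θ hΘ =>
    ⟨fun A hA => by
      obtain ⟨B, hB, hAB⟩ := h.1 A (hΘ hA)
      exact ⟨B, Finset.mem_filter.2 ⟨hB, A, hA, hAB⟩, hAB⟩,
     fun B hB => (Finset.mem_filter.1 hB).2⟩
  refine ⟨part Φ, part Φ', hpart Φ Finset.subset_union_left,
    hpart Φ' Finset.subset_union_right, ?_⟩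
  ext B
  simp only [part, Finset.mem_union, Finset.mem_filter, ← and_or_left, iff_self_and]
  intro hB
  obtain ⟨A, hA, hAB⟩ := h.2 B hB
  exact (Finset.mem_union.1 hA).imp (⟨A, ·, hAB⟩) (⟨A, ·, hAB⟩)

lemma NegNormSet.exists_normSet_image_neg_neg {Δ Ψ : Finset Tm}
    (h : NegNormSet (Δ.image NEG) Ψ) :
    ∃ Ψ', NormSet Δ Ψ' ∧ Ψ = Ψ'.image fun C => NEG (NEG C) := by
  have hinj : Function.Injective fun C => NEG (NEG C) := NEG_injective.comp NEG_injective
  refine ⟨Ψ.preimage _ hinj.injOn, ⟨fun A hA => ?_, fun C hC => ?_⟩, ?_⟩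
  · obtain ⟨B, hB, hAB⟩ := h.1 _ (Finset.mem_image_of_mem NEG hA)
    obtain ⟨C, hC, rfl⟩ := exists_eq_neg_neg_of_negBNF_neg hAB
    exact ⟨C, Finset.mem_preimage.2 hB, hC⟩
  · obtain ⟨_, hNA, hAB⟩ := h.2 _ (Finset.mem_preimage.1 hC)
    obtain ⟨A, hA, rfl⟩ := Finset.mem_image.1 hNA
    obtain ⟨C', hC', hCC'⟩ := exists_eq_neg_neg_of_negBNF_neg hAB
    exact ⟨A, hA, hinj hCC' ▸ hC'⟩
  · ext B
    simp only [Finset.mem_image, Finset.mem_preimage]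
    refine ⟨fun hB => ?_, fun ⟨C, hC, hCB⟩ => hCB ▸ hC⟩
    obtain ⟨_, hNA, hAB⟩ := h.2 B hB
    obtain ⟨A, -, rfl⟩ := Finset.mem_image.1 hNA
    obtain ⟨C, -, rfl⟩ := exists_eq_neg_neg_of_negBNF_neg hAB
    exact ⟨C, hB, rfl⟩

lemma of_union_image {α : Type*} [DecidableEq α] {S : Finset α → Prop} {f : α → α}
    (hinv : ∀ (Δ : Finset α) A, S (insert (f A) Δ) → S (insert A Δ)) (Θ : Finset α) :
    ∀ Γ, S (Γ ∪ Θ.image f) → S (Γ ∪ Θ) := by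
  induction Θ using Finset.induction_on with
  | empty => simp
  | insert A Θ _ ih =>
    intro Γ hS
    rw [Finset.image_insert, Finset.union_insert] at hS
    have := ih (insert A Γ) (by simpa only [Finset.insert_union] using hinv _ A hS)
    rwa [Finset.insert_union, ← Finset.union_insert] at this

theorem stmt8_general (S : Finset Tm → Prop)
    (hinv : ∀ (Δ : Finset Tm) A, S (insert (NEG (NEG A)) Δ) → S (insert A Δ))
    (Φ Δ : Finset Tm)
    (h : ¬ InGamma S (Φ ∪ Δ.image NEG)) :
    ∃ Ψ₁ Ψ₂ : Finset Tm, NegNormSet Φ Ψ₁ ∧ NormSet Δ Ψ₂ ∧ S (Ψ₁ ∪ Ψ₂) := by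
  obtain ⟨Ψ, hΨ, hS⟩ : ∃ Ψ, NegNormSet (Φ ∪ Δ.image NEG) Ψ ∧ S Ψ := by
    simpa [InGamma] using h
  obtain ⟨Ψ₁, Ψd, hΨ₁, hΨd, rfl⟩ := hΨ.exists_union_eq
  obtain ⟨Ψ₂, hΨ₂, rfl⟩ := hΨd.exists_normSet_image_neg_neg
  exact ⟨Ψ₁, Ψ₂, hΨ₁, hΨ₂, of_union_image hinv Ψ₂ Ψ₁ hS⟩

/-- If Φ ∪ ¬Δ ∉ Γ_S then the sequent ¬(Φ↓β) ∪ Δ↓β is derivable in S. -/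
theorem stmt8 (S : Finset Tm → Prop)
    (hinv : ∀ (Δ : Finset Tm) A, S (insert (NEG (NEG A)) Δ) → S (insert A Δ))
    (Φ Δ : Finset Tm) (hΦ : ∀ A ∈ Φ, Sent A) (hΔ : ∀ A ∈ Δ, Sent A)
    (h : ¬ InGamma S (Φ ∪ Δ.image NEG)) :
    ∃ Ψ₁ Ψ₂ : Finset Tm, NegNormSet Φ Ψ₁ ∧ NormSet Δ Ψ₂ ∧ S (Ψ₁ ∪ Ψ₂) :=
  stmt8_general S hinv Φ Δ h

end CutSim
end

section
/- Corollary (cut-elimination with linear blow-up for cut-strong sequents): if Δ is a sequent containing ¬A for a k-cut-strong formula A, then every derivation of Δ in G_β plus unrestricted cut with d proof steps and n cut applications yields a cut-free derivation of Δ in G_β with at most d + n·k proof steps. -/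
namespace CutSim

open Ty Tm

/-- G_β + unrestricted cut; indices: number of proof steps, number of cut applications -/
inductive DerC : Finset Tm → ℕ → ℕ → Prop
  | init {Δ : Finset Tm} {A} : Atomic A → DerC (insert A (insert (NEG A) Δ)) 1 0
  | negI {Δ : Finset Tm} {A n p} : DerC (insert A Δ) n p →
      DerC (insert (NEG (NEG A)) Δ) (n+1) p
  | orL {Δ : Finset Tm} {A B n m p q} : DerC (insert (NEG A) Δ) n p →
      DerC (insert (NEG B) Δ) m q → DerC (insert (NEG (OR A B)) Δ) (n+m+1) (p+q)
  | orR {Δ : Finset Tm} {A B n p} : DerC (insert A (insert B Δ)) n p →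
      DerC (insert (OR A B) Δ) (n+1) p
  | piL {Δ : Finset Tm} {a F C D n p} : HasTy [] C a → BetaNF (.app F C) D →
      DerC (insert (NEG D) Δ) n p → DerC (insert (NEG (PI a F)) Δ) (n+1) p
  | piR {Δ : Finset Tm} {a F c D n p} : BetaNF (.app F (.param c a)) D →
      (∀ B ∈ insert (PI a F) Δ, ¬ OccursParam c a B) →
      DerC (insert D Δ) n p → DerC (insert (PI a F) Δ) (n+1) p
  | cut {Δ : Finset Tm} {C n m p q} : BNSent C → DerC (insert C Δ) n p →
      DerC (insert (NEG C) Δ) m q → DerC Δ (n+m+1) (p+q+1)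

/-- G_β + cut_A; indices: number of proof steps, number of cut_A applications -/
inductive DerCA (A : Tm) : Finset Tm → ℕ → ℕ → Prop
  | init {Δ : Finset Tm} {B} : Atomic B → DerCA A (insert B (insert (NEG B) Δ)) 1 0
  | negI {Δ : Finset Tm} {B n p} : DerCA A (insert B Δ) n p →
      DerCA A (insert (NEG (NEG B)) Δ) (n+1) p
  | orL {Δ : Finset Tm} {B C n m p q} : DerCA A (insert (NEG B) Δ) n p →
      DerCA A (insert (NEG C) Δ) m q → DerCA A (insert (NEG (OR B C)) Δ) (n+m+1) (p+q)
  | orR {Δ : Finset Tm} {B C n p} : DerCA A (insert B (insert C Δ)) n p →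
      DerCA A (insert (OR B C) Δ) (n+1) p
  | piL {Δ : Finset Tm} {a F C D n p} : HasTy [] C a → BetaNF (.app F C) D →
      DerCA A (insert (NEG D) Δ) n p → DerCA A (insert (NEG (PI a F)) Δ) (n+1) p
  | piR {Δ : Finset Tm} {a F c D n p} : BetaNF (.app F (.param c a)) D →
      (∀ B ∈ insert (PI a F) Δ, ¬ OccursParam c a B) →
      DerCA A (insert D Δ) n p → DerCA A (insert (PI a F) Δ) (n+1) p
  | cutA {Δ : Finset Tm} {C n m p q} : BNSent C → DerCA A (insert C Δ) n p →
      DerCA A (insert (NEG C) Δ) m q → DerCA A (insert (NEG A) Δ) (n+m+1) (p+q+1)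

/-! Adding `¬A` to every sequent turns each cut into a cut on `A`: from `Δ, ¬A, C` and
`Δ, ¬A, ¬C`, cut_A concludes `Δ, ¬A, ¬A = Δ, ¬A`. This weakening preserves the size of the
derivation, because the eigenparameter of a `Π⁺` inference can always be renamed away from `A`.
The resulting derivation in G_β + cut_A has the same size and number of cuts, and
`k`-cut-strength of `A` removes each cut_A at the cost of at most `k` further steps. -/

namespace Tm

def renameParams (π : Ty → Equiv.Perm ℕ) : Tm → Tm
  | .var n => .var n
  | .param m b => .param (π b m) b
  | .cnot => .cnot
  | .cor => .cor
  | .cpi b => .cpi b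
  | .app f x => .app (renameParams π f) (renameParams π x)
  | .lam b t => .lam b (renameParams π t)

variable (π : Ty → Equiv.Perm ℕ)

@[simp] lemma renameParams_NEG (t : Tm) : (NEG t).renameParams π = NEG (t.renameParams π) := rfl

@[simp] lemma renameParams_OR (s t : Tm) :
    (OR s t).renameParams π = OR (s.renameParams π) (t.renameParams π) := rfl

@[simp] lemma renameParams_PI (a : Ty) (t : Tm) :
    (PI a t).renameParams π = PI a (t.renameParams π) := rfl

lemma renameParams_inv_renameParams (t : Tm) : (t.renameParams π).renameParams π⁻¹ = t := by
  induction t with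
  | param m b => simp [renameParams]
  | app f x ihf ihx => simp [renameParams, ihf, ihx]
  | lam b t ih => simp [renameParams, ih]
  | _ => rfl

lemma renameParams_shift (d c : ℕ) (t : Tm) :
    (shift d c t).renameParams π = shift d c (t.renameParams π) := by
  induction t generalizing c with
  | var n => by_cases h : n < c <;> simp [shift, renameParams, h]
  | app f x ihf ihx => simp [shift, renameParams, ihf, ihx]
  | lam b t ih => simp [shift, renameParams, ih]
  | _ => rfl

lemma renameParams_subst (k : ℕ) (s t : Tm) :
    (subst k s t).renameParams π = subst k (s.renameParams π) (t.renameParams π) := by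
  induction t generalizing k with
  | var n =>
    rcases eq_or_ne n k with rfl | h
    · simp [subst, renameParams, renameParams_shift]
    · by_cases h' : k < n <;> simp [subst, renameParams, h, h']
  | app f x ihf ihx => simp [subst, renameParams, ihf, ihx]
  | lam b t ih => simp [subst, renameParams, ih]
  | _ => rfl

lemma headIsLogical_renameParams (t : Tm) :
    headIsLogical (t.renameParams π) ↔ headIsLogical t := by
  induction t with
  | app f x ihf _ => exact ihf
  | _ => rfl

lemma occursParam_renameParams (m : ℕ) (b : Ty) (t : Tm) :
    OccursParam m b (t.renameParams π) ↔ OccursParam ((π b)⁻¹ m) b t := by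
  induction t with
  | param m' b' =>
    simp only [renameParams, OccursParam]
    constructor
    · rintro ⟨rfl, rfl⟩; simp
    · rintro ⟨rfl, rfl⟩; simp
  | app f x ihf ihx => simp only [renameParams, OccursParam, ihf, ihx]
  | lam b' t ih => exact ih
  | _ => rfl

lemma renameParams_eq_self {t : Tm} (h : ∀ m b, OccursParam m b t → π b m = m) :
    t.renameParams π = t := by
  induction t with
  | param m b => simp [renameParams, h m b ⟨rfl, rfl⟩]
  | app f x ihf ihx =>
    simp [renameParams, ihf fun m b hm => h m b (Or.inl hm), ihx fun m b hm => h m b (Or.inr hm)]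
  | lam b t ih => simp [renameParams, ih h]
  | _ => rfl

def paramBound : Tm → ℕ
  | .param m _ => m + 1
  | .app f x => max (paramBound f) (paramBound x)
  | .lam _ t => paramBound t
  | _ => 0

lemma lt_paramBound_of_occursParam {m : ℕ} {b : Ty} {t : Tm} (h : OccursParam m b t) :
    m < t.paramBound := by
  induction t with
  | param m' b' => obtain ⟨rfl, -⟩ := h; exact Nat.lt_succ_self m
  | app f x ihf ihx =>
    rcases h with h | h
    · exact lt_max_of_lt_left (ihf h)
    · exact lt_max_of_lt_right (ihx h)
  | lam b' t ih => exact ih h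
  | _ => exact h.elim

end Tm

lemma exists_fresh_param (S : Finset Tm) (a : Ty) : ∃ c, ∀ B ∈ S, ¬ OccursParam c a B :=
  ⟨S.sup Tm.paramBound, fun _ hB h =>
    (Tm.lt_paramBound_of_occursParam h).not_ge (Finset.le_sup hB)⟩

section Renaming

variable (π : Ty → Equiv.Perm ℕ)

lemma HasTy.renameParams {Γ : List Ty} {t : Tm} {τ : Ty} (h : HasTy Γ t τ) :
    HasTy Γ (t.renameParams π) τ := by
  induction h with
  | var h => exact .var h
  | param => exact .param
  | cnot => exact .cnot
  | cor => exact .cor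
  | cpi => exact .cpi
  | app _ _ ihf ihx => exact .app ihf ihx
  | lam _ ih => exact .lam ih

lemma Beta.renameParams {t t' : Tm} (h : Beta t t') :
    Beta (t.renameParams π) (t'.renameParams π) := by
  induction h with
  | beta => rw [Tm.renameParams_subst]; exact .beta
  | appl _ ih => exact .appl ih
  | appr _ ih => exact .appr ih
  | lam _ ih => exact .lam ih

lemma BetaStar.renameParams {t t' : Tm} (h : BetaStar t t') :
    BetaStar (t.renameParams π) (t'.renameParams π) :=
  Relation.ReflTransGen.lift (Tm.renameParams π) (fun _ _ => Beta.renameParams π) _ _ h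

lemma IsBetaNormal.renameParams {t : Tm} (h : IsBetaNormal t) : IsBetaNormal (t.renameParams π) :=
  fun B hB => h _ (by simpa only [Tm.renameParams_inv_renameParams] using hB.renameParams π⁻¹)

lemma BetaNF.renameParams {t t' : Tm} (h : BetaNF t t') :
    BetaNF (t.renameParams π) (t'.renameParams π) :=
  ⟨h.1.renameParams π, h.2.renameParams π⟩

lemma Atomic.renameParams {t : Tm} (h : Atomic t) : Atomic (t.renameParams π) :=
  ⟨h.1.renameParams π, by rw [Tm.headIsLogical_renameParams]; exact h.2⟩

lemma BNSent.renameParams {t : Tm} (h : BNSent t) : BNSent (t.renameParams π) :=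
  ⟨HasTy.renameParams π h.1, h.2.renameParams π⟩

lemma DerC.renameParams {Δ : Finset Tm} {n p : ℕ} (h : DerC Δ n p) :
    DerC (Δ.image (Tm.renameParams π)) n p := by
  induction h with
  | init hA =>
    simp only [Finset.image_insert, Tm.renameParams_NEG]
    exact .init (hA.renameParams π)
  | negI _ ih =>
    simp only [Finset.image_insert, Tm.renameParams_NEG] at ih ⊢
    exact .negI ih
  | orL _ _ ih₁ ih₂ =>
    simp only [Finset.image_insert, Tm.renameParams_NEG, Tm.renameParams_OR] at ih₁ ih₂ ⊢
    exact .orL ih₁ ih₂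
  | orR _ ih =>
    simp only [Finset.image_insert, Tm.renameParams_OR] at ih ⊢
    exact .orR ih
  | piL hC hnf _ ih =>
    simp only [Finset.image_insert, Tm.renameParams_NEG, Tm.renameParams_PI] at ih ⊢
    exact .piL (hC.renameParams π) (hnf.renameParams π) ih
  | @piR _ a _ c _ _ _ hnf hc _ ih =>
    simp only [Finset.image_insert, Tm.renameParams_PI] at ih ⊢
    refine .piR (c := π a c) (hnf.renameParams π) ?_ ih
    rw [← Tm.renameParams_PI, ← Finset.image_insert]
    rintro _ hB
    obtain ⟨B, hB₀, rfl⟩ := Finset.mem_image.mp hB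
    simpa [Tm.occursParam_renameParams] using hc B hB₀
  | cut hC _ _ ih₁ ih₂ =>
    simp only [Finset.image_insert, Tm.renameParams_NEG] at ih₁ ih₂
    exact .cut (hC.renameParams π) ih₁ ih₂

end Renaming

lemma DerC.exists_rename_eigenparam {Δ : Finset Tm} {a : Ty} {F D : Tm} {c c' n p : ℕ}
    (hnf : BetaNF (.app F (.param c a)) D)
    (hc : ∀ B ∈ insert (PI a F) Δ, ¬ OccursParam c a B)
    (hc' : ∀ B ∈ insert (PI a F) Δ, ¬ OccursParam c' a B) (h : DerC (insert D Δ) n p) :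
    ∃ D', BetaNF (.app F (.param c' a)) D' ∧ DerC (insert D' Δ) n p := by
  set π : Ty → Equiv.Perm ℕ := Pi.mulSingle a (Equiv.swap c c')
  have hfix : ∀ B, ¬ OccursParam c a B → ¬ OccursParam c' a B → B.renameParams π = B := by
    refine fun B hB hB' => Tm.renameParams_eq_self π fun m b hm => ?_
    rcases eq_or_ne b a with rfl | hb
    · simp only [π, Pi.mulSingle_eq_same]
      exact Equiv.swap_apply_of_ne_of_ne (fun h : m = c => hB (h ▸ hm))
        (fun h : m = c' => hB' (h ▸ hm))
    · simp [π, hb]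
  have hPI := Finset.mem_insert_self (PI a F) Δ
  have hF : F.renameParams π = F :=
    hfix F (fun h => hc _ hPI (Or.inr h)) (fun h => hc' _ hPI (Or.inr h))
  have hΔ : Δ.image (Tm.renameParams π) = Δ := by
    conv_rhs => rw [← Finset.image_id' (s := Δ)]
    refine Finset.image_congr fun B hB => hfix B (fun h => hc B ?_ h) (fun h => hc' B ?_ h) <;>
      exact Finset.mem_insert_of_mem hB
  refine ⟨D.renameParams π, ?_, ?_⟩
  · simpa [Tm.renameParams, hF, π] using hnf.renameParams π
  · simpa [hΔ] using h.renameParams π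

theorem DerC.toDerCA (A : Tm) {Δ : Finset Tm} {d p : ℕ} (h : DerC Δ d p) :
    DerCA A (insert (NEG A) Δ) d p := by
  induction d using Nat.strong_induction_on generalizing Δ p with
  | _ d IH =>
  cases h with
  | @init Δ B hB =>
    rw [Finset.insert_comm _ B, Finset.insert_comm _ (NEG B)]
    exact .init hB
  | negI h =>
    have ih := IH _ (by omega) h
    rw [Finset.insert_comm] at ih ⊢
    exact .negI ih
  | orL h₁ h₂ =>
    have ih₁ := IH _ (by omega) h₁
    have ih₂ := IH _ (by omega) h₂
    rw [Finset.insert_comm] at ih₁ ih₂ ⊢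
    exact .orL ih₁ ih₂
  | @orR Δ B C n p h =>
    have ih := IH _ (by omega) h
    rw [Finset.insert_comm _ B, Finset.insert_comm _ C] at ih
    rw [Finset.insert_comm]
    exact .orR ih
  | piL hC hnf h =>
    have ih := IH _ (by omega) h
    rw [Finset.insert_comm] at ih ⊢
    exact .piL hC hnf ih
  | @piR Δ a F c D n p hnf hc h =>
    -- `c` may occur in `A`, so the premise is first moved to a parameter fresh for `¬A` too.
    obtain ⟨c', hc'⟩ := exists_fresh_param (insert (PI a F) (insert (NEG A) Δ)) a
    obtain ⟨D', hnf', h'⟩ := h.exists_rename_eigenparam hnf hc fun B hB => hc' B (by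
      rw [Finset.insert_comm]; exact Finset.mem_insert_of_mem hB)
    have ih := IH _ (by omega) h'
    rw [Finset.insert_comm] at ih ⊢
    exact .piR hnf' hc' ih
  | cut hC h₁ h₂ =>
    have ih₁ := IH _ (by omega) h₁
    have ih₂ := IH _ (by omega) h₂
    rw [Finset.insert_comm] at ih₁ ih₂
    simpa only [Finset.insert_idem] using DerCA.cutA hC ih₁ ih₂

theorem DerCA.exists_der_le {k : ℕ} {A : Tm} (hA : CutStrong k A) {Δ : Finset Tm} {d p : ℕ}
    (h : DerCA A Δ d p) : ∃ s ≤ d + p * k, Der Δ s := by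
  induction h with
  | init hB => exact ⟨1, by simp, .init hB⟩
  | negI _ ih =>
    obtain ⟨s, hs, h⟩ := ih
    exact ⟨s + 1, by omega, .negI h⟩
  | orL _ _ ih₁ ih₂ =>
    obtain ⟨s₁, hs₁, h₁⟩ := ih₁
    obtain ⟨s₂, hs₂, h₂⟩ := ih₂
    exact ⟨s₁ + s₂ + 1, by rw [add_mul]; omega, .orL h₁ h₂⟩
  | orR _ ih =>
    obtain ⟨s, hs, h⟩ := ih
    exact ⟨s + 1, by omega, .orR h⟩
  | piL hC hnf _ ih =>
    obtain ⟨s, hs, h⟩ := ih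
    exact ⟨s + 1, by omega, .piL hC hnf h⟩
  | piR hnf hc _ ih =>
    obtain ⟨s, hs, h⟩ := ih
    exact ⟨s + 1, by omega, .piR hnf hc h⟩
  | cutA hC _ _ ih₁ ih₂ =>
    obtain ⟨s₁, hs₁, h₁⟩ := ih₁
    obtain ⟨s₂, hs₂, h₂⟩ := ih₂
    obtain ⟨s, hs, h⟩ := hA _ _ s₁ s₂ hC h₁ h₂
    exact ⟨s, by rw [add_mul, add_mul, one_mul]; omega, h⟩

/-- cut-elimination with linear blow-up for cut-strong sequents -/
theorem stmt12 (k : ℕ) (A : Tm) (hA : CutStrong k A) (Δ : Finset Tm)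
    (hmem : NEG A ∈ Δ) (d p : ℕ) (h : DerC Δ d p) :
    ∃ s ≤ d + p * k, Der Δ s := by
  have hCA := h.toDerCA A
  rw [Finset.insert_eq_of_mem hmem] at hCA
  exact hCA.exists_der_le hA

end CutSim
end
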